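/- arXiv:1608.08572 — 5 statements merged into one kernel-verified Lean document; each statement's English description precedes it below -/
import Mathlib

section
/- Let ‖·‖ : G → [0,∞) be a continuous homogeneous norm on a Carnot group G (continuous, vanishing only at the identity, and ‖δ_λ g‖ = λ‖g‖), and set d(g,h) = ‖g⁻¹h‖. Then there exists a continuous increasing function ζ : [0, 1/2) → ℝ with ζ(0) = 0 such that for all g, h ∈ G with d(g,h) < ε·d(e,g) (0 ≤ ε < 1/2), one has d(e,h) ≤ (1 + ζ(ε)) d(e,g). -/
/-!
Normalising by the dilation `δ (1 / ‖g‖)` reduces the claim to `‖x y‖ ≤ M ε` for `‖x‖ ≤ 1`,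
`‖y‖ ≤ ε`, where `M ε` is the supremum of `‖x y‖` over such pairs, and one takes
`ζ ε = max (M ε) 1 - 1`. Compactness of the unit ball makes `M` finite and gives `M ε → 1` as
`ε → 0`, since `‖y‖` is bounded below on the compact set of pairs with `‖x y‖ ≥ 1 + c`.
Homogeneity gives `M a ≤ M b ≤ (b / a) M a` for `a ≤ b`, which forces `M` to be continuous
away from `0`.
-/

open Set Filter Topology

theorem continuousAt_of_monotoneOn_of_le_div_mul {f : ℝ → ℝ} {b ε : ℝ} (hε : 0 < ε)
    (hεb : ε < b) (hfε : 0 ≤ f ε) (hmono : MonotoneOn f (Ioc 0 b))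
    (hscale : ∀ x y, 0 < x → x ≤ y → y ≤ b → f y ≤ y / x * f x) : ContinuousAt f ε := by
  have hlim : ∀ φ : ℝ → ℝ, Continuous φ → φ 1 = 1 →
      Tendsto (fun x => φ (x / ε) * f ε) (𝓝 ε) (𝓝 (f ε)) := by
    intro φ hφ hφ1
    simpa [hε.ne', hφ1] using
      ((hφ.comp (continuous_id.div_const ε)).tendsto ε).mul_const (f ε)
  have hnear : ∀ᶠ x in 𝓝 ε, x ∈ Ioc 0 b := Ioc_mem_nhds hε hεb
  refine tendsto_of_tendsto_of_tendsto_of_le_of_le'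
    (hlim (min 1) (continuous_const.min continuous_id) (min_self 1))
    (hlim (max 1) (continuous_const.max continuous_id) (max_self 1)) ?_ ?_
  · filter_upwards [hnear] with x hx
    rcases le_total ε x with hεx | hxε
    · calc min 1 (x / ε) * f ε ≤ 1 * f ε := by gcongr; exact min_le_left _ _
        _ ≤ f x := by rw [one_mul]; exact hmono ⟨hε, hεb.le⟩ hx hεx
    · have h := hscale x ε hx.1 hxε hεb.le
      calc min 1 (x / ε) * f ε ≤ x / ε * f ε := by gcongr; exact min_le_right _ _
        _ ≤ x / ε * (ε / x * f x) := by gcongr; exact div_nonneg hx.1.le hε.le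
        _ = f x := by field_simp [hx.1.ne']
  · filter_upwards [hnear] with x hx
    rcases le_total ε x with hεx | hxε
    · calc f x ≤ x / ε * f ε := hscale ε x hε hεx hx.2
        _ ≤ max 1 (x / ε) * f ε := by gcongr; exact le_max_right _ _
    · calc f x ≤ 1 * f ε := by rw [one_mul]; exact hmono hx ⟨hε, hεb.le⟩ hxε
        _ ≤ max 1 (x / ε) * f ε := by gcongr; exact le_max_left _ _

section HomogeneousNorm

variable {G : Type*} [Group G]

/-- Only meaningful for `0 ≤ ε ≤ 1`, where the set is nonempty and (the unit ball being compact)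
bounded; elsewhere `sSup` returns a junk value. -/
noncomputable def mulNormSup (N : G → ℝ) (ε : ℝ) : ℝ :=
  sSup (image2 (fun x y => N (x * y)) {x | N x ≤ 1} {y | N y ≤ ε})

theorem image2_mulNorm_nonempty {N : G → ℝ} (hN1 : N 1 = 0) {ε : ℝ} (hε : 0 ≤ ε) :
    (image2 (fun x y => N (x * y)) {x | N x ≤ 1} {y | N y ≤ ε}).Nonempty :=
  ⟨_, mem_image2_of_mem (show N 1 ≤ 1 by rw [hN1]; exact zero_le_one)
    (show N 1 ≤ ε by rw [hN1]; exact hε)⟩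

theorem mulNormSup_le {N : G → ℝ} (hN1 : N 1 = 0) {ε c : ℝ} (hε : 0 ≤ ε)
    (h : ∀ x y, N x ≤ 1 → N y ≤ ε → N (x * y) ≤ c) : mulNormSup N ε ≤ c :=
  csSup_le (image2_mulNorm_nonempty hN1 hε) (forall_mem_image2.2 fun x hx y hy => h x y hx hy)

theorem mulNormSup_zero_le_one {N : G → ℝ} (hNnn : ∀ g, 0 ≤ N g) (hN0 : ∀ g, N g = 0 ↔ g = 1) :
    mulNormSup N 0 ≤ 1 :=
  mulNormSup_le ((hN0 1).2 rfl) le_rfl fun x y hx hy => by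
    rwa [(hN0 y).1 (le_antisymm hy (hNnn y)), mul_one]

variable [TopologicalSpace G] [ContinuousMul G]

theorem bddAbove_image2_mulNorm {N : G → ℝ} (hNc : Continuous N)
    (hball : IsCompact {g : G | N g ≤ 1}) {ε : ℝ} (hε : ε ≤ 1) :
    BddAbove (image2 (fun x y => N (x * y)) {x | N x ≤ 1} {y | N y ≤ ε}) := by
  have hcpt : IsCompact (image2 (fun x y => N (x * y)) {x | N x ≤ 1} {y | N y ≤ 1}) := by
    rw [← image_uncurry_prod]
    exact (hball.prod hball).image (hNc.comp continuous_mul)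
  exact hcpt.bddAbove.mono (image2_subset_left fun _ hy => le_trans hy hε)

theorem le_mulNormSup {N : G → ℝ} (hNc : Continuous N) (hball : IsCompact {g : G | N g ≤ 1})
    {ε : ℝ} (hε : ε ≤ 1) {x y : G} (hx : N x ≤ 1) (hy : N y ≤ ε) :
    N (x * y) ≤ mulNormSup N ε :=
  le_csSup (bddAbove_image2_mulNorm hNc hball hε) (mem_image2_of_mem hx hy)

theorem mulNormSup_mono {N : G → ℝ} (hNc : Continuous N) (hball : IsCompact {g : G | N g ≤ 1})
    (hN1 : N 1 = 0) {a b : ℝ} (ha : 0 ≤ a) (hab : a ≤ b) (hb : b ≤ 1) :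
    mulNormSup N a ≤ mulNormSup N b :=
  csSup_le_csSup (bddAbove_image2_mulNorm hNc hball hb) (image2_mulNorm_nonempty hN1 ha)
    (image2_subset_left fun _ hy => le_trans hy hab)

theorem mulNormSup_le_div_mul {N : G → ℝ} {δ : ℝ → G → G} (hNc : Continuous N)
    (hball : IsCompact {g : G | N g ≤ 1}) (hN1 : N 1 = 0)
    (hNδ : ∀ (l : ℝ) (g : G), 0 < l → N (δ l g) = l * N g)
    (hδmul : ∀ (l : ℝ) (g h : G), 0 < l → δ l (g * h) = δ l g * δ l h)
    {a b : ℝ} (ha : 0 < a) (hab : a ≤ b) (hb : b ≤ 1) :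
    mulNormSup N b ≤ b / a * mulNormSup N a := by
  have hb0 : 0 < b := ha.trans_le hab
  have hl : 0 < a / b := div_pos ha hb0
  refine mulNormSup_le hN1 hb0.le fun x y hx hy => ?_
  have hδx : N (δ (a / b) x) ≤ 1 := by
    rw [hNδ _ _ hl]
    nlinarith [(div_le_one hb0).2 hab]
  have hδy : N (δ (a / b) y) ≤ a := by
    rw [hNδ _ _ hl]
    calc a / b * N y ≤ a / b * b := by gcongr
      _ = a := by field_simp
  have hδxy := le_mulNormSup hNc hball (hab.trans hb) hδx hδy
  rw [← hδmul _ _ _ hl, hNδ _ _ hl] at hδxy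
  calc N (x * y) = b / a * (a / b * N (x * y)) := by field_simp
    _ ≤ b / a * mulNormSup N a := by gcongr

theorem exists_pos_forall_norm_mul_lt {N : G → ℝ} (hNc : Continuous N)
    (hNnn : ∀ g, 0 ≤ N g) (hN0 : ∀ g, N g = 0 ↔ g = 1) (hball : IsCompact {g : G | N g ≤ 1})
    {c : ℝ} (hc : 0 < c) :
    ∃ ε₀ ∈ Ioc 0 1, ∀ x y, N x ≤ 1 → N y ≤ ε₀ → N (x * y) < 1 + c := by
  set K := ({g : G | N g ≤ 1} ×ˢ {g : G | N g ≤ 1}) ∩ {p | 1 + c ≤ N (p.1 * p.2)}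
  have hK : IsCompact K :=
    (hball.prod hball).inter_right (isClosed_le continuous_const (hNc.comp continuous_mul))
  have hpos : ∀ p ∈ K, 0 < N p.2 := by
    rintro ⟨x, y⟩ ⟨⟨hx : N x ≤ 1, -⟩, hxy : 1 + c ≤ N (x * y)⟩
    refine (hNnn y).lt_of_ne fun hy => ?_
    rw [(hN0 y).1 hy.symm, mul_one] at hxy
    linarith [hx.trans' hxy]
  obtain ⟨m, hm, hmK⟩ := hK.exists_forall_le' (hNc.comp continuous_snd).continuousOn hpos
  refine ⟨min (m / 2) 1, ⟨by positivity, min_le_right _ _⟩, fun x y hx hy => ?_⟩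
  by_contra! hxy
  have hm' : m ≤ N y := hmK (x, y) ⟨⟨hx, hy.trans (min_le_right _ _)⟩, hxy⟩
  linarith [hy.trans (min_le_left _ _)]

theorem exists_pos_mulNormSup_lt {N : G → ℝ} (hNc : Continuous N)
    (hNnn : ∀ g, 0 ≤ N g) (hN0 : ∀ g, N g = 0 ↔ g = 1) (hball : IsCompact {g : G | N g ≤ 1})
    {a : ℝ} (ha : 1 < a) : ∃ ε₀ ∈ Ioc 0 1, mulNormSup N ε₀ < a := by
  obtain ⟨ε₀, hε₀, h⟩ := exists_pos_forall_norm_mul_lt hNc hNnn hN0 hball (c := (a - 1) / 2)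
    (by linarith)
  refine ⟨ε₀, hε₀, ?_⟩
  calc mulNormSup N ε₀ ≤ 1 + (a - 1) / 2 :=
        mulNormSup_le ((hN0 1).2 rfl) hε₀.1.le fun x y hx hy => (h x y hx hy).le
    _ < a := by linarith

theorem continuousWithinAt_max_mulNormSup_one_zero {N : G → ℝ} (hNc : Continuous N)
    (hNnn : ∀ g, 0 ≤ N g) (hN0 : ∀ g, N g = 0 ↔ g = 1) (hball : IsCompact {g : G | N g ≤ 1})
    {s : Set ℝ} (hs : s ⊆ Icc 0 1) :
    ContinuousWithinAt (fun ε => max (mulNormSup N ε) 1) s 0 := by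
  rw [ContinuousWithinAt, max_eq_right (mulNormSup_zero_le_one hNnn hN0)]
  refine tendsto_order.2 ⟨fun a ha => Eventually.of_forall fun ε => ha.trans_le (le_max_right _ _),
    fun a ha => ?_⟩
  obtain ⟨ε₀, hε₀, hM⟩ := exists_pos_mulNormSup_lt hNc hNnn hN0 hball ha
  filter_upwards [self_mem_nhdsWithin, nhdsWithin_le_nhds (gt_mem_nhds hε₀.1)] with ε hε hεε₀
  exact max_lt
    ((mulNormSup_mono hNc hball ((hN0 1).2 rfl) (hs hε).1 hεε₀.le hε₀.2).trans_lt hM) ha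

theorem norm_le_mulNormSup_mul {N : G → ℝ} {δ : ℝ → G → G} (hNc : Continuous N)
    (hNnn : ∀ g, 0 ≤ N g) (hball : IsCompact {g : G | N g ≤ 1})
    (hNδ : ∀ (l : ℝ) (g : G), 0 < l → N (δ l g) = l * N g)
    (hδmul : ∀ (l : ℝ) (g h : G), 0 < l → δ l (g * h) = δ l g * δ l h)
    {ε : ℝ} (hε : ε ≤ 1) {g h : G} (hgh : N (g⁻¹ * h) < ε * N g) :
    N h ≤ mulNormSup N ε * N g := by
  have hg : 0 < N g := (hNnn g).lt_of_ne fun hg => by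
    rw [← hg, mul_zero] at hgh
    exact (hNnn _).not_gt hgh
  have hl : 0 < 1 / N g := one_div_pos.2 hg
  have hx : N (δ (1 / N g) g) ≤ 1 := by
    rw [hNδ _ _ hl, one_div_mul_cancel hg.ne']
  have hy : N (δ (1 / N g) (g⁻¹ * h)) ≤ ε := by
    rw [hNδ _ _ hl, one_div_mul_eq_div, div_le_iff₀ hg]
    exact hgh.le
  have hxy := le_mulNormSup hNc hball hε hx hy
  rw [← hδmul _ _ _ hl, mul_inv_cancel_left, hNδ _ _ hl, one_div_mul_eq_div,
    div_le_iff₀ hg] at hxy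
  exact hxy

end HomogeneousNorm

theorem stmt10_general {G : Type*} [Group G] [TopologicalSpace G] [IsTopologicalGroup G]
    (Nm : G → ℝ) (δ : ℝ → G → G)
    (hNc : Continuous Nm) (hNnn : ∀ g, 0 ≤ Nm g)
    (hN0 : ∀ g, Nm g = 0 ↔ g = 1)
    (hNδ : ∀ (l : ℝ) (g : G), 0 < l → Nm (δ l g) = l * Nm g)
    (hδmul : ∀ (l : ℝ) (g h : G), 0 < l → δ l (g * h) = δ l g * δ l h)
    (hball : IsCompact {g : G | Nm g ≤ 1}) :
    ∃ ζ : ℝ → ℝ, ContinuousOn ζ (Set.Ico 0 (1/2)) ∧ MonotoneOn ζ (Set.Ico 0 (1/2)) ∧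
      ζ 0 = 0 ∧
      ∀ ε ∈ Set.Ico (0 : ℝ) (1/2), ∀ g h : G,
        Nm (g⁻¹ * h) < ε * Nm g → Nm h ≤ (1 + ζ ε) * Nm g := by
  have hN1 : Nm 1 = 0 := (hN0 1).2 rfl
  have hsub : Ico (0 : ℝ) (1 / 2) ⊆ Icc 0 1 :=
    Ico_subset_Icc_self.trans (Icc_subset_Icc_right (by norm_num))
  have hmono : MonotoneOn (mulNormSup Nm) (Icc 0 1) := fun a ha b hb hab =>
    mulNormSup_mono hNc hball hN1 ha.1 hab hb.2
  refine ⟨fun ε => max (mulNormSup Nm ε) 1 - 1, fun ε hε => ?_, fun a ha b hb hab => ?_, ?_,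
    fun ε hε g h hgh => ?_⟩
  · refine ContinuousWithinAt.sub ?_ continuousWithinAt_const
    rcases hε.1.eq_or_lt with rfl | hε0
    · exact continuousWithinAt_max_mulNormSup_one_zero hNc hNnn hN0 hball hsub
    have hM : 0 ≤ mulNormSup Nm ε := by
      simpa [hN1] using le_mulNormSup hNc hball (hsub hε).2 (hN1.trans_le zero_le_one)
        (hN1.trans_le hε.1)
    refine ContinuousAt.continuousWithinAt (ContinuousAt.sup ?_ continuousAt_const)
    exact continuousAt_of_monotoneOn_of_le_div_mul hε0 (hε.2.trans one_half_lt_one) hM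
      (hmono.mono Ioc_subset_Icc_self)
      fun x y hx hxy hy => mulNormSup_le_div_mul hNc hball hN1 hNδ hδmul hx hxy hy
  · exact sub_le_sub_right (max_le_max_right 1 (hmono (hsub ha) (hsub hb) hab)) 1
  · simp [mulNormSup_zero_le_one hNnn hN0]
  · calc Nm h ≤ mulNormSup Nm ε * Nm g :=
          norm_le_mulNormSup_mul hNc hNnn hball hNδ hδmul (hsub hε).2 hgh
      _ ≤ (1 + (max (mulNormSup Nm ε) 1 - 1)) * Nm g := by
          gcongr
          · exact hNnn g
          · linarith [le_max_left (mulNormSup Nm ε) 1]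

/-- for a continuous homogeneous norm `Nm` on a Carnot group `G`
(with dilations `δ` acting as automorphisms and compact unit ball), setting
`d(g,h) = Nm (g⁻¹ h)`, there is a continuous increasing function
`ζ : [0,1/2) → ℝ` with `ζ 0 = 0` such that `d(g,h) < ε·d(1,g)` implies
`d(1,h) ≤ (1 + ζ ε)·d(1,g)`. -/
theorem stmt10 {G : Type*} [Group G] [TopologicalSpace G] [IsTopologicalGroup G]
    (Nm : G → ℝ) (δ : ℝ → G → G)
    (hNc : Continuous Nm) (hNnn : ∀ g, 0 ≤ Nm g)
    (hN0 : ∀ g, Nm g = 0 ↔ g = 1)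
    (hNδ : ∀ (l : ℝ) (g : G), 0 < l → Nm (δ l g) = l * Nm g)
    (hδmul : ∀ (l : ℝ) (g h : G), 0 < l → δ l (g * h) = δ l g * δ l h)
    (hδc : ∀ l : ℝ, 0 < l → Continuous (δ l))
    (hball : IsCompact {g : G | Nm g ≤ 1}) :
    ∃ ζ : ℝ → ℝ, ContinuousOn ζ (Set.Ico 0 (1/2)) ∧ MonotoneOn ζ (Set.Ico 0 (1/2)) ∧
      ζ 0 = 0 ∧
      ∀ ε ∈ Set.Ico (0 : ℝ) (1/2), ∀ g h : G,
        Nm (g⁻¹ * h) < ε * Nm g → Nm h ≤ (1 + ζ ε) * Nm g :=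
  stmt10_general Nm δ hNc hNnn hN0 hNδ hδmul hball
end

section
/- Let G be a Carnot group in exponential coordinates with Haar measure ℒⁿ, let v ∈ V₁ be a nonzero horizontal vector, G⊥_v the exponential image of the subspace of 𝔤 orthogonal to v, and let ν_v : G → G⊥_v map g to the unique intersection point of the horizontal line g·exp(ℝv) with G⊥_v. Then for every measurable A ⊆ G and every g ∈ G, ℒ^{n−1}(ν_v(gA)) = ℒ^{n−1}(ν_v(A)); i.e., the (n−1)-dimensional measure of the backwards projection is invariant under left translation of A. -/
/-!
Through `ν_v`, left translation by `g` descends to the map `r ↦ ν_v(g r)` of the hyperplane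
`G⊥_v ≅ ℝⁿ`, because `ν_v` is constant on the horizontal lines `a · exp(ℝ v)`. In the triangular
coordinates of the group law this map is unitriangular: its `i`-th coordinate is `r i` plus a
function of the earlier coordinates. Such a map preserves Lebesgue measure (Fubini, one coordinate
at a time), and `g⁻¹` induces its inverse, so it preserves the outer measure of every set, in
particular of `ν_v(A)`.
-/

open MeasureTheory Set

/-- The backwards projection along the horizontal line `g · exp(ℝ·e₀)` (first
coordinate direction) onto the hyperplane `{x | x 0 = 0}`, written in the
coordinates `1, …, n` of that hyperplane. -/
noncomputable def nuProj (n : ℕ)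
    (mul : (Fin (n+1) → ℝ) → (Fin (n+1) → ℝ) → (Fin (n+1) → ℝ))
    (g : Fin (n+1) → ℝ) : Fin n → ℝ :=
  fun i => mul g (fun j => if j = 0 then -(g 0) else 0) i.succ

def IsUnitriangular {n : ℕ} (T : (Fin n → ℝ) → Fin n → ℝ) : Prop :=
  ∀ (i : Fin n) (x y : Fin n → ℝ), (∀ j < i, x j = y j) → T x i - x i = T y i - y i

namespace IsUnitriangular

variable {n : ℕ} {S T : (Fin n → ℝ) → Fin n → ℝ}

theorem apply_eq (hT : IsUnitriangular T) {i : Fin n} {x y : Fin n → ℝ}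
    (hxy : ∀ j ≤ i, x j = y j) : T x i = T y i := by
  have := hT i x y fun j hj => hxy j hj.le
  linarith [hxy i le_rfl]

theorem comp (hS : IsUnitriangular S) (hT : IsUnitriangular T) : IsUnitriangular (S ∘ T) := by
  intro i x y hxy
  have hTxy : ∀ j < i, T x j = T y j := fun j hj =>
    hT.apply_eq fun k hk => hxy k (hk.trans_lt hj)
  have hS_i := hS i (T x) (T y) hTxy
  have hT_i := hT i x y hxy
  simp only [Function.comp_apply]
  linarith

theorem tail_cons {T : (Fin (n + 1) → ℝ) → Fin (n + 1) → ℝ} (hT : IsUnitriangular T) (t : ℝ) :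
    IsUnitriangular fun r => Fin.tail (T (Fin.cons t r)) := by
  intro i r s hrs
  have hcons : ∀ j < i.succ,
      (Fin.cons t r : Fin (n + 1) → ℝ) j = (Fin.cons t s : Fin (n + 1) → ℝ) j := by
    intro j
    refine Fin.cases (fun _ => rfl) (fun j hj => ?_) j
    exact hrs j (Fin.succ_lt_succ_iff.mp hj)
  simpa [Fin.tail] using hT i.succ _ _ hcons

theorem apply_zero {T : (Fin (n + 1) → ℝ) → Fin (n + 1) → ℝ} (hT : IsUnitriangular T)
    (x : Fin (n + 1) → ℝ) : T x 0 = x 0 + T 0 0 := by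
  have := hT 0 x 0 fun j hj => absurd hj (Fin.not_lt_zero j)
  simp only [Pi.zero_apply, sub_zero] at this
  linarith

theorem eq_cons_tail_cons {T : (Fin (n + 1) → ℝ) → Fin (n + 1) → ℝ} (hT : IsUnitriangular T)
    (x : Fin (n + 1) → ℝ) :
    T x = Fin.cons (x 0 + T 0 0) (Fin.tail (T (Fin.cons (x 0) (Fin.tail x)))) := by
  rw [Fin.cons_self_tail, ← hT.apply_zero, Fin.cons_self_tail]

theorem measurePreserving (hT : IsUnitriangular T) (hTm : Measurable T) :
    MeasurePreserving T volume volume := by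
  induction n with
  | zero => simpa [Subsingleton.elim T id] using MeasurePreserving.id volume
  | succ n ih =>
    let e := MeasurableEquiv.piFinSuccAbove (fun _ : Fin (n + 1) => ℝ) 0
    let F : ℝ → (Fin n → ℝ) → Fin n → ℝ := fun t r => Fin.tail (T (Fin.cons t r))
    have hFm : Measurable (Function.uncurry F) :=
      (measurable_pi_lambda Fin.tail fun i => measurable_pi_apply i.succ).comp
        (hTm.comp (continuous_fst.finCons continuous_snd).measurable)
    have hskew : MeasurePreserving (fun p : ℝ × (Fin n → ℝ) => (p.1 + T 0 0, F p.1 p.2))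
        volume volume :=
      (measurePreserving_add_right volume (T 0 0)).skew_product hFm <|
        .of_forall fun t => (ih (hT.tail_cons t) (hFm.comp measurable_prodMk_left)).map_eq
    have he : MeasurePreserving e volume volume := volume_preserving_piFinSuccAbove _ 0
    have hTe : T = e.symm ∘ (fun p => (p.1 + T 0 0, F p.1 p.2)) ∘ e := by
      funext x
      rw [hT.eq_cons_tail_cons x]
      simp [e, F, Fin.consEquiv]
    rw [hTe]
    exact (he.symm e).comp (hskew.comp he)

end IsUnitriangular

def horizontalLine (n : ℕ) (t : ℝ) : Fin (n + 1) → ℝ := fun j => if j = 0 then t else 0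

theorem horizontalLine_zero (n : ℕ) : horizontalLine n 0 = 0 := by
  funext j
  simp [horizontalLine]

theorem horizontalLine_apply_zero (n : ℕ) (t : ℝ) : horizontalLine n t 0 = t := if_pos rfl

theorem continuous_horizontalLine (n : ℕ) : Continuous (horizontalLine n) :=
  continuous_pi fun _ => continuous_if_const _ (fun _ => continuous_id) fun _ => continuous_const

section GroupLaw

variable {n : ℕ} (mul : (Fin (n + 1) → ℝ) → (Fin (n + 1) → ℝ) → (Fin (n + 1) → ℝ))

/-- `ν_v(a)` as a point of the hyperplane `G⊥_v = {x | x 0 = 0}` itself; `nuProj` drops its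
vanishing coordinate `0`. -/
def hyperplaneProj (a : Fin (n + 1) → ℝ) : Fin (n + 1) → ℝ :=
  mul a (horizontalLine n (-(a 0)))

noncomputable def nuAction (g : Fin (n + 1) → ℝ) (r : Fin n → ℝ) : Fin n → ℝ :=
  nuProj n mul (mul g (Fin.cons 0 r))

variable {mul}

theorem nuProj_eq_tail_hyperplaneProj (a : Fin (n + 1) → ℝ) :
    nuProj n mul a = Fin.tail (hyperplaneProj mul a) := rfl

theorem hyperplaneProj_apply_zero (h0 : ∀ x y, mul x y 0 = x 0 + y 0) (a : Fin (n + 1) → ℝ) :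
    hyperplaneProj mul a 0 = 0 := by
  simp [hyperplaneProj, h0, horizontalLine_apply_zero]

theorem cons_zero_nuProj (h0 : ∀ x y, mul x y 0 = x 0 + y 0) (a : Fin (n + 1) → ℝ) :
    Fin.cons 0 (nuProj n mul a) = hyperplaneProj mul a := by
  rw [← hyperplaneProj_apply_zero h0 a]
  exact Fin.cons_self_tail _

theorem hyperplaneProj_mul_horizontalLine (hassoc : ∀ x y z, mul (mul x y) z = mul x (mul y z))
    (h0 : ∀ x y, mul x y 0 = x 0 + y 0)
    (hline : ∀ s t, mul (horizontalLine n s) (horizontalLine n t) = horizontalLine n (s + t))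
    (a : Fin (n + 1) → ℝ) (t : ℝ) :
    hyperplaneProj mul (mul a (horizontalLine n t)) = hyperplaneProj mul a := by
  simp only [hyperplaneProj, hassoc, hline, h0, horizontalLine_apply_zero]
  ring_nf

theorem mul_hyperplaneProj_horizontalLine (hassoc : ∀ x y z, mul (mul x y) z = mul x (mul y z))
    (hmul_zero : ∀ x, mul x 0 = x)
    (hline : ∀ s t, mul (horizontalLine n s) (horizontalLine n t) = horizontalLine n (s + t))
    (a : Fin (n + 1) → ℝ) :
    mul (hyperplaneProj mul a) (horizontalLine n (a 0)) = a := by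
  rw [hyperplaneProj, hassoc, hline, neg_add_cancel, horizontalLine_zero, hmul_zero]

theorem nuProj_mul (hassoc : ∀ x y z, mul (mul x y) z = mul x (mul y z))
    (hmul_zero : ∀ x, mul x 0 = x) (h0 : ∀ x y, mul x y 0 = x 0 + y 0)
    (hline : ∀ s t, mul (horizontalLine n s) (horizontalLine n t) = horizontalLine n (s + t))
    (g a : Fin (n + 1) → ℝ) :
    nuProj n mul (mul g a) = nuAction mul g (nuProj n mul a) := by
  rw [nuAction, cons_zero_nuProj h0, nuProj_eq_tail_hyperplaneProj,
    nuProj_eq_tail_hyperplaneProj,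
    ← hyperplaneProj_mul_horizontalLine hassoc h0 hline (mul g (hyperplaneProj mul a)) (a 0),
    hassoc, mul_hyperplaneProj_horizontalLine hassoc hmul_zero hline]

theorem nuAction_nuAction (hassoc : ∀ x y z, mul (mul x y) z = mul x (mul y z))
    (hmul_zero : ∀ x, mul x 0 = x) (h0 : ∀ x y, mul x y 0 = x 0 + y 0)
    (hline : ∀ s t, mul (horizontalLine n s) (horizontalLine n t) = horizontalLine n (s + t))
    (g h : Fin (n + 1) → ℝ) (r : Fin n → ℝ) :
    nuAction mul g (nuAction mul h r) = nuAction mul (mul g h) r := by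
  change nuAction mul g (nuProj n mul (mul h (Fin.cons 0 r))) = _
  rw [← nuProj_mul hassoc hmul_zero h0 hline, ← hassoc]
  rfl

theorem nuAction_zero (hzero_mul : ∀ x, mul 0 x = x) (hmul_zero : ∀ x, mul x 0 = x)
    (r : Fin n → ℝ) : nuAction mul 0 r = r := by
  rw [nuAction, hzero_mul, nuProj_eq_tail_hyperplaneProj, hyperplaneProj, Fin.cons_zero,
    neg_zero, horizontalLine_zero, hmul_zero, Fin.tail_cons]

theorem continuous_hyperplaneProj (hcont : Continuous fun p : _ × _ => mul p.1 p.2) :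
    Continuous (hyperplaneProj mul) :=
  hcont.comp (continuous_id.prodMk ((continuous_horizontalLine n).comp (continuous_apply 0).neg))

theorem continuous_nuAction (hcont : Continuous fun p : _ × _ => mul p.1 p.2)
    (g : Fin (n + 1) → ℝ) : Continuous (nuAction mul g) :=
  continuous_pi fun i => (continuous_apply i.succ).comp <| (continuous_hyperplaneProj hcont).comp <|
    hcont.comp (continuous_const.prodMk (continuous_const.finCons continuous_id))

end GroupLaw

section Triangular

variable {n : ℕ} {mul : (Fin (n + 1) → ℝ) → (Fin (n + 1) → ℝ) → (Fin (n + 1) → ℝ)}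

theorem isUnitriangular_mul_left
    (htri : ∀ (i : Fin (n + 1)) (x x' y y' : Fin (n + 1) → ℝ), (∀ j < i, x j = y j) →
      (∀ j < i, x' j = y' j) → mul x x' i - x i - x' i = mul y y' i - y i - y' i)
    (g : Fin (n + 1) → ℝ) : IsUnitriangular (mul g) := by
  intro i x y hxy
  linarith [htri i g x g y (fun _ _ => rfl) hxy]

theorem isUnitriangular_mul_right
    (htri : ∀ (i : Fin (n + 1)) (x x' y y' : Fin (n + 1) → ℝ), (∀ j < i, x j = y j) →
      (∀ j < i, x' j = y' j) → mul x x' i - x i - x' i = mul y y' i - y i - y' i)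
    (h : Fin (n + 1) → ℝ) : IsUnitriangular fun x => mul x h := by
  intro i x y hxy
  linarith [htri i x h y h hxy fun _ _ => rfl]

/-- `g` first moves `G⊥_v` into the hyperplane `{x | x 0 = g 0}`, which the right translation
by `exp(-(g 0) v)` then brings back. -/
theorem nuAction_eq_comp (h0 : ∀ x y, mul x y 0 = x 0 + y 0) (g : Fin (n + 1) → ℝ) :
    nuAction mul g = (fun s => Fin.tail (mul (Fin.cons (g 0) s) (horizontalLine n (-(g 0))))) ∘
      fun r => Fin.tail (mul g (Fin.cons 0 r)) := by
  funext r
  have hg0 : mul g (Fin.cons 0 r) 0 = g 0 := by rw [h0, Fin.cons_zero, add_zero]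
  rw [Function.comp_apply, ← hg0, Fin.cons_self_tail]
  rfl

theorem isUnitriangular_nuAction
    (htri : ∀ (i : Fin (n + 1)) (x x' y y' : Fin (n + 1) → ℝ), (∀ j < i, x j = y j) →
      (∀ j < i, x' j = y' j) → mul x x' i - x i - x' i = mul y y' i - y i - y' i)
    (h0 : ∀ x y, mul x y 0 = x 0 + y 0) (g : Fin (n + 1) → ℝ) :
    IsUnitriangular (nuAction mul g) := by
  rw [nuAction_eq_comp h0]
  exact ((isUnitriangular_mul_right htri _).tail_cons _).comp
    ((isUnitriangular_mul_left htri g).tail_cons 0)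

end Triangular

theorem volume_nuAction_image {n : ℕ}
    {mul : (Fin (n + 1) → ℝ) → (Fin (n + 1) → ℝ) → (Fin (n + 1) → ℝ)}
    (hassoc : ∀ x y z, mul (mul x y) z = mul x (mul y z))
    (hid : ∀ x, mul 0 x = x ∧ mul x 0 = x)
    (htri : ∀ (i : Fin (n + 1)) (x x' y y' : Fin (n + 1) → ℝ), (∀ j < i, x j = y j) →
      (∀ j < i, x' j = y' j) → mul x x' i - x i - x' i = mul y y' i - y i - y' i)
    (h0 : ∀ x y, mul x y 0 = x 0 + y 0) (hcont : Continuous fun p : _ × _ => mul p.1 p.2)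
    (hline : ∀ s t, mul (horizontalLine n s) (horizontalLine n t) = horizontalLine n (s + t))
    {g g' : Fin (n + 1) → ℝ} (hgg' : mul g g' = 0) (hg'g : mul g' g = 0) (s : Set (Fin n → ℝ)) :
    volume (nuAction mul g '' s) = volume s := by
  have hinvAction : ∀ {a b}, mul a b = 0 → ∀ r, nuAction mul a (nuAction mul b r) = r :=
    fun hab r => by
      rw [nuAction_nuAction hassoc (fun x => (hid x).2) h0 hline, hab,
        nuAction_zero (fun x => (hid x).1) fun x => (hid x).2]
  let e : (Fin n → ℝ) ≃ᵐ (Fin n → ℝ) :=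
    { toFun := nuAction mul g
      invFun := nuAction mul g'
      left_inv := hinvAction hg'g
      right_inv := hinvAction hgg'
      measurable_toFun := (continuous_nuAction hcont g).measurable
      measurable_invFun := (continuous_nuAction hcont g').measurable }
  have he : MeasurePreserving e volume volume :=
    (isUnitriangular_nuAction htri h0 g).measurePreserving e.measurable
  rw [show nuAction mul g '' s = e.symm ⁻¹' s from e.image_eq_preimage_symm s]
  exact (he.symm e).measure_preimage_equiv s

/-- for a Carnot/nilpotent triangular polynomial group law on
`ℝ^{n+1}` whose first coordinate is additive (a horizontal direction `v = e₀`),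
the `(n)`-dimensional Lebesgue measure of the backwards projection `ν_v` of a
measurable set onto the orthogonal hyperplane is invariant under left translation:
`ℒ(ν_v(gA)) = ℒ(ν_v(A))`. -/
theorem stmt12 (n : ℕ)
    (mul : (Fin (n+1) → ℝ) → (Fin (n+1) → ℝ) → (Fin (n+1) → ℝ))
    (hassoc : ∀ x y z, mul (mul x y) z = mul x (mul y z))
    (hid : ∀ x, mul 0 x = x ∧ mul x 0 = x)
    (hinv : ∀ x, ∃ y, mul x y = 0 ∧ mul y x = 0)
    (htri : ∀ (i : Fin (n+1)) (x x' y y' : Fin (n+1) → ℝ),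
      (∀ j, j < i → x j = y j) → (∀ j, j < i → x' j = y' j) →
      mul x x' i - x i - x' i = mul y y' i - y i - y' i)
    (h0 : ∀ x y, mul x y 0 = x 0 + y 0)
    (hcont : Continuous fun p : (Fin (n+1) → ℝ) × (Fin (n+1) → ℝ) => mul p.1 p.2)
    (hline : ∀ s t : ℝ,
      mul (fun j => if j = 0 then s else 0) (fun j => if j = 0 then t else 0)
        = fun j => if j = 0 then s + t else 0) :
    ∀ (g : Fin (n+1) → ℝ) (A : Set (Fin (n+1) → ℝ)), MeasurableSet A →
      volume (nuProj n mul '' ((mul g) '' A)) = volume (nuProj n mul '' A) := by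
  intro g A _
  obtain ⟨g', hgg', hg'g⟩ := hinv g
  have hproj : nuProj n mul ∘ mul g = nuAction mul g ∘ nuProj n mul :=
    funext (nuProj_mul hassoc (fun x => (hid x).2) h0 hline g)
  rw [image_image, ← Function.comp_def, hproj, image_comp]
  exact volume_nuAction_image hassoc hid htri h0 hcont hline hgg' hg'g _
end

section
/- Let (X, d, μ) be a doubling metric measure space and let Δ = {Q_ω^k} be a Christ dyadic decomposition with constants τ > 1, C₁ > 0, η > 0; in particular each cube Q of level −k satisfies B(z_Q, τ^{−k}) ⊆ Q ⊆ B(z_Q, τ^{−k+2}) and μ{x ∉ Q : d(x,Q) ≤ tτ^{−k}} ≤ C₁ t^η μ(Q). Let A ⊂ B(0,1) be measurable with μ(A) > 0, let ζ = 1 on A and ζ = β₀ > 1 off A, let 𝒯_k be the cubes of level −k contained in B(0,1), 𝒯_k' = {Q ∈ 𝒯_k : (1/μ(Q))∫_Q ζ dμ < (1+β₀)/2}, and R_k = ∪_{Q ∈ 𝒯_k'} Q. Then for any sets A_k with R_k ⊆ A_k ⊆ B(R_k, k⁻¹ τ^{−k}), the sequence A_k converges to A in measure: μ(A_k △ A)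 → 0 as k → ∞. -/
/-!
The ζ-average of a cube `Q` is below `(1 + β₀)/2` exactly when `A` fills more than half of `Q`,
so `R_k` is the union of the "majority cubes" of level `k` inside `B(x₀, 1)`.
By Lebesgue's density theorem for balls with moving centres, almost every `x ∈ A` eventually sees
`A` fill almost all of the ball `closedBall z_Q (τ^{2-k})` around its cube `Q`; the doubling
property makes that ball comparable in measure to `Q`, so `Q` is a majority cube. Symmetrically,
almost every `x ∉ A` eventually lies in a cube where `A` is a minority. By dominated convergence
`μ(R_k △ A) → 0`. Finally `A_k \ R_k` lies in the `k⁻¹τ^{-k}`-boundary layers of the selected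
cubes, whose total measure is `≤ C₁ k^{-η} μ(B(x₀, 1))` by the small-boundary property.
-/

open MeasureTheory Metric Set Filter Classical
open scoped Topology NNReal ENNReal

section

variable {X : Type*} [MeasurableSpace X] {μ : Measure X}

def majorityCubes (μ : Measure X) (𝒬 : Set (Set X)) (U A : Set X) : Set (Set X) :=
  {Q ∈ 𝒬 | Q ⊆ U ∧ μ.real (Q \ A) < μ.real (Q ∩ A)}

theorem setIntegral_ite_mem {Q A : Set X} [DecidablePred (· ∈ A)] (hA : MeasurableSet A)
    (hQ : μ Q ≠ ∞) (a b : ℝ) :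
    ∫ x in Q, (if x ∈ A then a else b) ∂μ = a * μ.real (Q ∩ A) + b * μ.real (Q \ A) := by
  have : IsFiniteMeasure (μ.restrict Q) := isFiniteMeasure_restrict.2 hQ
  change ∫ x in Q, A.piecewise (fun _ ↦ a) (fun _ ↦ b) x ∂μ = _
  rw [integral_piecewise hA (integrable_const a).integrableOn (integrable_const b).integrableOn,
    setIntegral_const, setIntegral_const, measureReal_restrict_apply hA,
    measureReal_restrict_apply hA.compl, inter_comm, ← sdiff_eq_compl_inter, inter_comm]
  ring

theorem setIntegral_ite_lt_iff {Q A : Set X} [DecidablePred (· ∈ A)] (hA : MeasurableSet A)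
    (hQ : μ Q ≠ ∞) {β : ℝ} (hβ : 1 < β) :
    ∫ x in Q, (if x ∈ A then 1 else β) ∂μ < (1 + β) / 2 * μ.real Q ↔
      μ.real (Q \ A) < μ.real (Q ∩ A) := by
  rw [setIntegral_ite_mem hA hQ, ← measureReal_inter_add_sdiff hA hQ]
  constructor <;> intro h <;> nlinarith

theorem setOf_setIntegral_ite_lt_eq_majorityCubes {𝒬 : Set (Set X)} {U A : Set X}
    [DecidablePred (· ∈ A)] (hA : MeasurableSet A) (h𝒬 : ∀ Q ∈ 𝒬, μ Q ≠ ∞) {β : ℝ}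
    (hβ : 1 < β) :
    {Q ∈ 𝒬 | Q ⊆ U ∧ ∫ x in Q, (if x ∈ A then 1 else β) ∂μ < (1 + β) / 2 * μ.real Q} =
      majorityCubes μ 𝒬 U A := by
  ext Q
  exact and_congr_right fun hQ ↦ and_congr_right fun _ ↦ setIntegral_ite_lt_iff hA (h𝒬 Q hQ) hβ

theorem measureReal_sdiff_lt_measureReal_inter {Q B S : Set X} (hS : MeasurableSet S)
    (hB : μ B ≠ ∞) (hQB : Q ⊆ B) {C : ℝ} (hC : 1 ≤ C) (hBQ : μ.real B ≤ C * μ.real Q)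
    (hdense : 1 - (2 * C)⁻¹ < μ.real (S ∩ B) / μ.real B) :
    μ.real (Q \ S) < μ.real (Q ∩ S) := by
  have hQ : μ Q ≠ ∞ := measure_ne_top_of_subset hQB hB
  have hBpos : 0 < μ.real B := by
    by_contra! h
    have hB0 : μ.real B = 0 := le_antisymm h measureReal_nonneg
    rw [hB0, div_zero] at hdense
    have : (2 * C)⁻¹ ≤ 1 := inv_le_one_of_one_le₀ (by linarith)
    linarith
  have hSB : (1 - (2 * C)⁻¹) * μ.real B < μ.real (B ∩ S) := by
    rwa [inter_comm, ← lt_div_iff₀ hBpos]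
  have hsplitB := measureReal_inter_add_sdiff (μ := μ) hS hB
  have hsplitQ := measureReal_inter_add_sdiff (μ := μ) hS hQ
  have hmono : μ.real (Q \ S) ≤ μ.real (B \ S) :=
    measureReal_mono (sdiff_subset_sdiff_left hQB) (measure_ne_top_of_subset sdiff_subset hB)
  have hscale : (2 * C)⁻¹ * μ.real B ≤ μ.real Q / 2 := by
    rw [inv_mul_le_iff₀ (by positivity)]
    linarith
  linarith

theorem measure_thickening_sUnion_sdiff_le [PseudoMetricSpace X] {T : Set (Set X)}
    (hT : T.Countable) (hdisj : T.PairwiseDisjoint id) (hmeas : ∀ Q ∈ T, MeasurableSet Q)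
    {s : ℝ} {a : ℝ≥0∞} (h : ∀ Q ∈ T, μ {x | x ∉ Q ∧ infDist x Q ≤ s} ≤ a * μ Q) :
    μ (thickening s (⋃₀ T) \ ⋃₀ T) ≤ a * μ (⋃₀ T) := by
  have hsub : thickening s (⋃₀ T) \ ⋃₀ T ⊆ ⋃ Q ∈ T, {x | x ∉ Q ∧ infDist x Q ≤ s} := by
    rintro x ⟨hx, hxT⟩
    obtain ⟨y, ⟨Q, hQ, hyQ⟩, hxy⟩ := mem_thickening_iff.1 hx
    exact mem_biUnion hQ ⟨fun hxQ ↦ hxT ⟨Q, hQ, hxQ⟩, (infDist_le_dist_of_mem hyQ).trans hxy.le⟩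
  calc μ (thickening s (⋃₀ T) \ ⋃₀ T)
      ≤ ∑' Q : T, μ {x | x ∉ (Q : Set X) ∧ infDist x Q ≤ s} :=
        (measure_mono hsub).trans (measure_biUnion_le μ hT _)
    _ ≤ ∑' Q : T, a * μ Q := ENNReal.tsum_le_tsum fun Q ↦ h Q Q.2
    _ = a * μ (⋃₀ T) := by rw [ENNReal.tsum_mul_left, measure_sUnion hT hdisj hmeas]

theorem tendsto_measure_thickening_sUnion_sdiff [PseudoMetricSpace X] {T : ℕ → Set (Set X)}
    {U : Set X} (hU : μ U ≠ ∞) (hTU : ∀ k, ⋃₀ T k ⊆ U) (hT : ∀ k, (T k).Countable)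
    (hdisj : ∀ k, (T k).PairwiseDisjoint id) (hmeas : ∀ k, ∀ Q ∈ T k, MeasurableSet Q)
    {r : ℕ → ℝ} {C₁ η : ℝ} (hη : 0 < η)
    (hsmall : ∀ k, ∀ Q ∈ T k, ∀ t ∈ Ioo (0 : ℝ) 1,
      μ {x | x ∉ Q ∧ infDist x Q ≤ t * r k} ≤ ENNReal.ofReal (C₁ * t ^ η) * μ Q) :
    Tendsto (fun k : ℕ ↦ μ (thickening ((k : ℝ)⁻¹ * r k) (⋃₀ T k) \ ⋃₀ T k)) atTop (𝓝 0) := by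
  have hpow : Tendsto (fun k : ℕ ↦ ((k : ℝ)⁻¹) ^ η) atTop (𝓝 0) := by
    have := (Real.continuousAt_rpow_const 0 η (.inr hη.le)).tendsto.comp
      (tendsto_inv_atTop_zero.comp tendsto_natCast_atTop_atTop)
    rwa [Real.zero_rpow hη.ne'] at this
  have hbound :
      Tendsto (fun k : ℕ ↦ ENNReal.ofReal (C₁ * ((k : ℝ)⁻¹) ^ η) * μ U) atTop (𝓝 0) := by
    have := ENNReal.Tendsto.mul_const (ENNReal.tendsto_ofReal (hpow.const_mul C₁)) (.inr hU)
    rwa [mul_zero, ENNReal.ofReal_zero, zero_mul] at this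
  refine tendsto_of_tendsto_of_tendsto_of_le_of_le' tendsto_const_nhds hbound
    (.of_forall fun _ ↦ zero_le) ?_
  filter_upwards [eventually_gt_atTop 1] with k hk
  have ht : (k : ℝ)⁻¹ ∈ Ioo (0 : ℝ) 1 :=
    ⟨by positivity, inv_lt_one_of_one_lt₀ (by exact_mod_cast hk)⟩
  grw [measure_thickening_sUnion_sdiff_le (hT k) (hdisj k) (hmeas k)
    fun Q hQ ↦ hsmall k Q hQ _ ht, hTU k]

theorem tendsto_measure_symmDiff_of_subset_thickening [PseudoMetricSpace X] {ι : Type*}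
    {l : Filter ι} {R S : ι → Set X} {A : Set X} {s : ι → ℝ}
    (hR : Tendsto (fun i ↦ μ (symmDiff (R i) A)) l (𝓝 0))
    (hstrip : Tendsto (fun i ↦ μ (thickening (s i) (R i) \ R i)) l (𝓝 0))
    (hRS : ∀ i, R i ⊆ S i) (hSR : ∀ i, S i ⊆ R i ∪ thickening (s i) (R i)) :
    Tendsto (fun i ↦ μ (symmDiff (S i) A)) l (𝓝 0) := by
  refine tendsto_of_tendsto_of_tendsto_of_le_of_le tendsto_const_nhds
    (by simpa using hstrip.add hR) (fun _ ↦ zero_le) fun i ↦ ?_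
  have hSR' : symmDiff (S i) (R i) ⊆ thickening (s i) (R i) \ R i := by
    rw [symmDiff_of_ge (hRS i)]
    exact fun x ⟨hxS, hxR⟩ ↦ ⟨(hSR i hxS).resolve_left hxR, hxR⟩
  exact (measure_symmDiff_le _ (R i) _).trans (by gcongr)

variable [MetricSpace X] [BorelSpace X] [ProperSpace X] [IsUnifLocDoublingMeasure μ]
  [IsFiniteMeasureOnCompacts μ]

theorem ae_eventually_measureReal_sdiff_lt_inter {S : Set X} (hS : MeasurableSet S) {c : ℝ}
    (hc : 0 < c) :
    ∀ᵐ x ∂μ, x ∈ S → ∀ {ι : Type*} {l : Filter ι} (Q : ι → Set X) (z : ι → X) (r : ι → ℝ),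
      Tendsto r l (𝓝[>] 0) → (∀ i, ball (z i) (r i) ⊆ Q i) →
      (∀ i, Q i ⊆ closedBall (z i) (c * r i)) → (∀ i, x ∈ Q i) →
      ∀ᶠ i in l, μ.real (Q i \ S) < μ.real (Q i ∩ S) := by
  have hdensity := IsUnifLocDoublingMeasure.ae_tendsto_measure_inter_div μ S 1
  rw [ae_restrict_iff' hS] at hdensity
  filter_upwards [hdensity] with x hx hxS ι l Q z r hr hzQ hQz hxQ
  set C := IsUnifLocDoublingMeasure.scalingConstantOf μ (2 * c)
  have hC : (1 : ℝ) ≤ C := IsUnifLocDoublingMeasure.one_le_scalingConstantOf μ _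
  have hpos : ∀ᶠ i in l, 0 < r i := hr self_mem_nhdsWithin
  have hcr : Tendsto (fun i ↦ c * r i) l (𝓝[>] 0) := by
    refine tendsto_nhdsWithin_iff.2 ⟨?_, hpos.mono fun i hi ↦ mul_pos hc hi⟩
    simpa using (tendsto_nhds_of_tendsto_nhdsWithin hr).const_mul c
  have hhalf : Tendsto (fun i ↦ r i / 2) l (𝓝[>] 0) := by
    refine tendsto_nhdsWithin_iff.2 ⟨?_, hpos.mono fun i hi ↦ half_pos hi⟩
    simpa using (tendsto_nhds_of_tendsto_nhdsWithin hr).div_const 2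
  have hratio := (ENNReal.tendsto_toReal ENNReal.one_ne_top).comp
    (hx hxS z (fun i ↦ c * r i) hcr (.of_forall fun i ↦ by simpa using hQz i (hxQ i)))
  rw [ENNReal.toReal_one] at hratio
  filter_upwards [hratio.eventually_const_lt
      (sub_lt_self 1 (inv_pos.2 (by linarith : (0 : ℝ) < 2 * C))), hpos,
    hhalf.eventually (IsUnifLocDoublingMeasure.eventually_measure_le_scaling_constant_mul μ (2 * c))]
    with i hi hri hdoubling
  rw [Function.comp_apply, ENNReal.toReal_div] at hi
  refine measureReal_sdiff_lt_measureReal_inter hS measure_closedBall_lt_top.ne (hQz i) hC ?_ hi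
  have hball : closedBall (z i) (r i / 2) ⊆ Q i :=
    (closedBall_subset_ball (half_lt_self hri)).trans (hzQ i)
  have hBQ : μ (closedBall (z i) (c * r i)) ≤ C * μ (Q i) :=
    calc μ (closedBall (z i) (c * r i)) = μ (closedBall (z i) (2 * c * (r i / 2))) := by ring_nf
      _ ≤ C * μ (closedBall (z i) (r i / 2)) := hdoubling (z i)
      _ ≤ C * μ (Q i) := by gcongr
  have hQ : μ (Q i) ≠ ∞ := measure_ne_top_of_subset (hQz i) measure_closedBall_lt_top.ne
  simpa [measureReal_def] using ENNReal.toReal_mono (ENNReal.mul_ne_top ENNReal.coe_ne_top hQ) hBQ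

theorem ae_eventually_mem_sUnion_majorityCubes_iff {cubes : ℕ → Set (Set X)} {U A : Set X}
    {r : ℕ → ℝ} {c : ℝ} (hU : IsOpen U) (hAU : A ⊆ U) (hA : MeasurableSet A) (hc : 0 < c)
    (hr : Tendsto r atTop (𝓝[>] 0)) (hdisj : ∀ k, (cubes k).PairwiseDisjoint id)
    (hcover : ∀ᵐ x ∂μ, ∀ k, x ∈ ⋃₀ cubes k)
    (hsand : ∀ k, ∀ Q ∈ cubes k, ∃ z, ball z (r k) ⊆ Q ∧ Q ⊆ closedBall z (c * r k)) :
    ∀ᵐ x ∂μ, ∀ᶠ k in atTop, x ∈ ⋃₀ majorityCubes μ (cubes k) U A ↔ x ∈ A := by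
  filter_upwards [ae_eventually_measureReal_sdiff_lt_inter hA hc,
    ae_eventually_measureReal_sdiff_lt_inter hA.compl hc, hcover] with x hxA hxAc hx
  choose Q hQ hxQ using hx
  choose z hzQ hQz using fun k ↦ hsand k (Q k) (hQ k)
  by_cases hxA' : x ∈ A
  · obtain ⟨ε, hε, hεU⟩ := Metric.isOpen_iff.1 hU x (hAU hxA')
    have hQU : ∀ᶠ k in atTop, Q k ⊆ U := by
      have hlim : Tendsto (fun k ↦ 2 * c * r k) atTop (𝓝 0) := by
        simpa using (tendsto_nhds_of_tendsto_nhdsWithin hr).const_mul (2 * c)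
      filter_upwards [hlim.eventually_lt_const hε] with k hk y hy
      have hy' := hQz k hy
      have hx' := hQz k (hxQ k)
      rw [mem_closedBall] at hy' hx'
      exact hεU (mem_ball.2 (by linarith [dist_triangle_right y x (z k)]))
    filter_upwards [hxA hxA' Q z r hr hzQ hQz hxQ, hQU] with k hk hkU
    simp only [hxA', iff_true]
    exact ⟨Q k, ⟨hQ k, hkU, hk⟩, hxQ k⟩
  · filter_upwards [hxAc hxA' Q z r hr hzQ hQz hxQ] with k hk
    simp only [hxA', iff_false]
    rintro ⟨Q', ⟨hQ', -, hlt⟩, hxQ'⟩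
    obtain rfl : Q' = Q k := (hdisj k).elim hQ' (hQ k) (not_disjoint_iff.2 ⟨x, hxQ', hxQ k⟩)
    rw [sdiff_compl, ← sdiff_eq] at hk
    exact lt_asymm hk hlt

theorem tendsto_measure_sUnion_majorityCubes_symmDiff {cubes : ℕ → Set (Set X)} {U A : Set X}
    {r : ℕ → ℝ} {c : ℝ} (hU : IsOpen U) (hUfin : μ U ≠ ∞) (hAU : A ⊆ U) (hA : MeasurableSet A)
    (hc : 0 < c) (hr : Tendsto r atTop (𝓝[>] 0)) (hcount : ∀ k, (cubes k).Countable)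
    (hmeas : ∀ k, ∀ Q ∈ cubes k, MeasurableSet Q) (hdisj : ∀ k, (cubes k).PairwiseDisjoint id)
    (hcover : ∀ᵐ x ∂μ, ∀ k, x ∈ ⋃₀ cubes k)
    (hsand : ∀ k, ∀ Q ∈ cubes k, ∃ z, ball z (r k) ⊆ Q ∧ Q ⊆ closedBall z (c * r k)) :
    Tendsto (fun k ↦ μ (symmDiff (⋃₀ majorityCubes μ (cubes k) U A) A)) atTop (𝓝 0) := by
  have hRU : ∀ k, ⋃₀ majorityCubes μ (cubes k) U A ⊆ U := fun k ↦
    sUnion_subset fun Q hQ ↦ hQ.2.1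
  have hRmeas : ∀ k, MeasurableSet (⋃₀ majorityCubes μ (cubes k) U A) := fun k ↦
    .sUnion ((hcount k).mono fun Q hQ ↦ hQ.1) fun Q hQ ↦ hmeas k Q hQ.1
  refine measure_empty (μ := μ) ▸ tendsto_measure_of_ae_tendsto_indicator atTop
    MeasurableSet.empty (fun k ↦ (hRmeas k).symmDiff hA) hU.measurableSet hUfin
    (.of_forall fun k ↦ symmDiff_subset_union.trans (union_subset (hRU k) hAU)) ?_
  filter_upwards [ae_eventually_mem_sUnion_majorityCubes_iff hU hAU hA hc hr hdisj hcover hsand]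
    with x hx
  filter_upwards [hx] with k hk
  simp [mem_symmDiff, hk]

end

theorem tendsto_zpow_neg_natCast_nhdsGT_zero {τ : ℝ} (hτ : 1 < τ) :
    Tendsto (fun k : ℕ ↦ τ ^ (-(k : ℤ))) atTop (𝓝[>] 0) := by
  have hτ0 : 0 < τ := by linarith
  refine tendsto_nhdsWithin_iff.2 ⟨?_, .of_forall fun k ↦ zpow_pos hτ0 _⟩
  simpa [zpow_neg, inv_pow] using
    tendsto_pow_atTop_nhds_zero_of_lt_one (inv_nonneg.2 hτ0.le) (inv_lt_one_of_one_lt₀ hτ)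

theorem stmt15_general {X : Type*} [MetricSpace X] [MeasurableSpace X] [BorelSpace X]
    [ProperSpace X]
    (μ : Measure X) [IsUnifLocDoublingMeasure μ] [IsFiniteMeasureOnCompacts μ]
    (τ C₁ η : ℝ) (hτ : 1 < τ) (hη : 0 < η)
    (cubes : ℕ → Set (Set X))
    (hmeas : ∀ k, ∀ Q ∈ cubes k, MeasurableSet Q)
    (hdisj : ∀ k, (cubes k).PairwiseDisjoint id)
    (hcover : ∀ k, μ (Set.univ \ ⋃₀ cubes k) = 0)
    (hsand : ∀ k, ∀ Q ∈ cubes k, ∃ z : X,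
      ball z (τ ^ (-(k : ℤ))) ⊆ Q ∧ Q ⊆ ball z (τ ^ (-(k : ℤ) + 2)))
    (hsmall : ∀ k, ∀ Q ∈ cubes k, ∀ t ∈ Set.Ioo (0 : ℝ) 1,
      μ {x | x ∉ Q ∧ infDist x Q ≤ t * τ ^ (-(k : ℤ))}
        ≤ ENNReal.ofReal (C₁ * t ^ η) * μ Q)
    (x₀ : X) (β₀ : ℝ) (hβ₀ : 1 < β₀)
    (A : Set X) (hA : A ⊆ ball x₀ 1) (hAm : MeasurableSet A) :
    letI ζ : X → ℝ := fun x => if x ∈ A then 1 else β₀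
    letI R : ℕ → Set X := fun k =>
      ⋃₀ {Q ∈ cubes k | Q ⊆ ball x₀ 1 ∧
        (∫ x in Q, ζ x ∂μ) < (1 + β₀) / 2 * (μ Q).toReal}
    ∀ Ak : ℕ → Set X,
      (∀ k, R k ⊆ Ak k) →
      (∀ k, Ak k ⊆ R k ∪ thickening ((k : ℝ)⁻¹ * τ ^ (-(k : ℤ))) (R k)) →
      Tendsto (fun k => μ (symmDiff (Ak k) A)) atTop (nhds 0) := by
  intro Ak hRAk hAkR
  have hτ0 : 0 < τ := by linarith
  have hsandClosed : ∀ k, ∀ Q ∈ cubes k, ∃ z, ball z (τ ^ (-(k : ℤ))) ⊆ Q ∧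
      Q ⊆ closedBall z (τ ^ 2 * τ ^ (-(k : ℤ))) := fun k Q hQ ↦ by
    obtain ⟨z, hzQ, hQz⟩ := hsand k Q hQ
    refine ⟨z, hzQ, hQz.trans (ball_subset_closedBall.trans_eq ?_)⟩
    rw [zpow_add₀ hτ0.ne', mul_comm, zpow_two, sq]
  have hcount : ∀ k, (cubes k).Countable := fun k ↦
    (hdisj k).countable_of_nonempty_interior fun Q hQ ↦
      let ⟨z, hzQ, _⟩ := hsand k Q hQ
      ⟨z, interior_maximal hzQ isOpen_ball (mem_ball_self (zpow_pos hτ0 _))⟩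
  have hselect : ∀ k, {Q ∈ cubes k | Q ⊆ ball x₀ 1 ∧
      (∫ x in Q, (if x ∈ A then 1 else β₀) ∂μ) < (1 + β₀) / 2 * (μ Q).toReal} =
      majorityCubes μ (cubes k) (ball x₀ 1) A := fun k ↦
    setOf_setIntegral_ite_lt_eq_majorityCubes hAm (fun Q hQ ↦ let ⟨_, _, hQz⟩ := hsandClosed k Q hQ
      measure_ne_top_of_subset hQz measure_closedBall_lt_top.ne) hβ₀
  simp only [hselect] at hRAk hAkR
  refine tendsto_measure_symmDiff_of_subset_thickening ?_ ?_ hRAk hAkR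
  · refine tendsto_measure_sUnion_majorityCubes_symmDiff isOpen_ball measure_ball_lt_top.ne hA
      hAm (by positivity) (tendsto_zpow_neg_natCast_nhdsGT_zero hτ) hcount hmeas hdisj ?_ hsandClosed
    exact ae_all_iff.2 fun k ↦ (measure_eq_zero_iff_ae_notMem.1 (hcover k)).mono fun x hx ↦
      by simpa using hx
  · exact tendsto_measure_thickening_sUnion_sdiff measure_ball_lt_top.ne
      (fun k ↦ sUnion_subset fun Q hQ ↦ hQ.2.1) (fun k ↦ (hcount k).mono fun Q hQ ↦ hQ.1)
      (fun k ↦ (hdisj k).subset fun Q hQ ↦ hQ.1) (fun k Q hQ ↦ hmeas k Q hQ.1) hη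
      fun k Q hQ ↦ hsmall k Q hQ.1

/-- Christ dyadic cubes and convergence in measure.  Given a Christ
dyadic decomposition of a doubling metric measure space (each level-`−k` cube
sandwiched between balls of radii `τ^{−k}` and `τ^{−k+2}`, with the small-boundaries
property), a measurable `A ⊆ B(x₀,1)` of positive measure, `ζ = 1` on `A` and `β₀`
off `A`, the unions `R_k` of level-`−k` cubes inside `B(x₀,1)` whose `ζ`-average is
`< (1+β₀)/2`, and any sets `A_k` with `R_k ⊆ A_k ⊆ B(R_k, k⁻¹τ^{−k})`, the sequence
`A_k` converges to `A` in measure. -/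
theorem stmt15 {X : Type*} [MetricSpace X] [MeasurableSpace X] [BorelSpace X]
    [ProperSpace X]
    (μ : Measure X) [IsUnifLocDoublingMeasure μ] [IsFiniteMeasureOnCompacts μ]
    (τ C₁ η : ℝ) (hτ : 1 < τ) (hC₁ : 0 < C₁) (hη : 0 < η)
    (cubes : ℕ → Set (Set X))
    (hmeas : ∀ k, ∀ Q ∈ cubes k, MeasurableSet Q)
    (hdisj : ∀ k, (cubes k).PairwiseDisjoint id)
    (hcover : ∀ k, μ (Set.univ \ ⋃₀ cubes k) = 0)
    (hsand : ∀ k, ∀ Q ∈ cubes k, ∃ z : X,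
      ball z (τ ^ (-(k : ℤ))) ⊆ Q ∧ Q ⊆ ball z (τ ^ (-(k : ℤ) + 2)))
    (hsmall : ∀ k, ∀ Q ∈ cubes k, ∀ t ∈ Set.Ioo (0 : ℝ) 1,
      μ {x | x ∉ Q ∧ infDist x Q ≤ t * τ ^ (-(k : ℤ))}
        ≤ ENNReal.ofReal (C₁ * t ^ η) * μ Q)
    (x₀ : X) (β₀ : ℝ) (hβ₀ : 1 < β₀)
    (A : Set X) (hA : A ⊆ ball x₀ 1) (hAm : MeasurableSet A) (hApos : 0 < μ A) :
    letI ζ : X → ℝ := fun x => if x ∈ A then 1 else β₀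
    letI R : ℕ → Set X := fun k =>
      ⋃₀ {Q ∈ cubes k | Q ⊆ ball x₀ 1 ∧
        (∫ x in Q, ζ x ∂μ) < (1 + β₀) / 2 * (μ Q).toReal}
    ∀ Ak : ℕ → Set X,
      (∀ k, R k ⊆ Ak k) →
      (∀ k, Ak k ⊆ R k ∪ thickening ((k : ℝ)⁻¹ * τ ^ (-(k : ℤ))) (R k)) →
      Tendsto (fun k => μ (symmDiff (Ak k) A)) atTop (nhds 0) :=
  stmt15_general μ τ C₁ η hτ hη cubes hmeas hdisj hcover hsand hsmall x₀ β₀ hβ₀ A hA hAm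
end

section
/- Let G be a Carnot group with the semi-metric d(g,h) = ‖g⁻¹h‖ from a p-convex homogeneous norm: there are p, C ≥ 1 such that for all u, v, w ∈ G, (d(u,v)^p + d(v,w)^p)/2 ≥ (d(u,w)/2)^p + C·NH(u⁻¹w)^p. Suppose f : G ⊇ U → G satisfies d(f(0), f(e^x)) ≥ A·d(0, e^x) with d(0,e^x) = 1 and d(0, e^{x/2}) = d(e^{x/2}, e^x) = 1/2 for a horizontal x, and suppose NH(f(0)⁻¹f(e^x)) ≥ τ·‖f(0)⁻¹f(e^x)‖ for some τ ∈ (0,1). Then at least one of the pairs (0, e^{x/2}) or (e^{x/2}, e^x) is (1 + k)A-stretched by f, where k = 2^{p−1}·C·p⁻¹·τ^p, provided τ is small enough that (1 + 2^p C τ^p)^{1/p} ≥ 1 + 2^{p−1}Cp⁻¹τ^p. -/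
/-!
Apply `p`-convexity to the images `f 1, f g₁, f g₂`. Since the image increment is
`τ`-non-horizontal, the correction term `C · NH^p` is at least `C (τA)^p`, so the mean of the
`p`-th powers of the two half-distances is at least `(A/2)^p (1 + 2^p C τ^p)`. Hence one
half-distance is at least `(A/2)(1 + 2^p C τ^p)^{1/p}`, which the Taylor-type hypothesis bounds
below by `(1 + k) A / 2`.
-/

theorem le_or_le_of_rpow_le_add_div_two {a b L p : ℝ} (ha : 0 ≤ a) (hb : 0 ≤ b) (hp : 0 < p)
    (h : L ^ p ≤ (a ^ p + b ^ p) / 2) : L ≤ a ∨ L ≤ b := by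
  by_contra! hlt
  have hap := Real.rpow_lt_rpow ha hlt.1 hp
  have hbp := Real.rpow_lt_rpow hb hlt.2 hp
  linarith

theorem rpow_le_add_div_two_of_pConvex {A D N a b C τ p : ℝ} (hA : 0 ≤ A) (hτ : 0 ≤ τ)
    (hC : 0 ≤ C) (hp : 0 < p) (hAD : A ≤ D) (hND : τ * D ≤ N)
    (hconv : (D / 2) ^ p + C * N ^ p ≤ (a ^ p + b ^ p) / 2) :
    (A / 2 * (1 + 2 ^ p * C * τ ^ p) ^ p⁻¹) ^ p ≤ (a ^ p + b ^ p) / 2 := by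
  have hsplit : (A / 2 * (1 + 2 ^ p * C * τ ^ p) ^ p⁻¹) ^ p
      = (A / 2) ^ p + C * (τ * A) ^ p := by
    have hA2 : (A / 2) ^ p * 2 ^ p = A ^ p := by
      rw [← Real.mul_rpow (by positivity) (by norm_num), div_mul_cancel₀ A two_ne_zero]
    rw [Real.mul_rpow (by positivity) (by positivity), Real.rpow_inv_rpow (by positivity) hp.ne',
      Real.mul_rpow hτ hA, ← hA2]
    ring
  have hhalf : (A / 2) ^ p ≤ (D / 2) ^ p := by gcongr
  have hNH : (τ * A) ^ p ≤ N ^ p := by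
    gcongr
    exact (mul_le_mul_of_nonneg_left hAD hτ).trans hND
  rw [hsplit]
  nlinarith

theorem stmt17_general {G : Type*} [Group G]
    (Nm NH : G → ℝ) (d : G → G → ℝ)
    (hd : ∀ g h, d g h = Nm (g⁻¹ * h))
    (hdnn : ∀ g h, 0 ≤ d g h)
    (p C : ℝ) (hp : 1 ≤ p) (hC : 1 ≤ C)
    (hconv : ∀ u v w : G,
      (d u w / 2) ^ p + C * NH (u⁻¹ * w) ^ p ≤ (d u v ^ p + d v w ^ p) / 2)
    (g₁ g₂ : G) (h01 : d 1 g₁ = 1 / 2) (h02 : d 1 g₂ = 1) (h12 : d g₁ g₂ = 1 / 2)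
    (f : G → G) (A : ℝ) (hA : 0 < A)
    (hstretch : A * d 1 g₂ ≤ d (f 1) (f g₂))
    (τ : ℝ) (hτ : 0 < τ)
    (hNH : τ * Nm ((f 1)⁻¹ * f g₂) ≤ NH ((f 1)⁻¹ * f g₂))
    (htaylor : 1 + 2 ^ (p - 1) * C * p⁻¹ * τ ^ p ≤ (1 + 2 ^ p * C * τ ^ p) ^ p⁻¹) :
    (1 + 2 ^ (p - 1) * C * p⁻¹ * τ ^ p) * A * d 1 g₁ ≤ d (f 1) (f g₁) ∨
    (1 + 2 ^ (p - 1) * C * p⁻¹ * τ ^ p) * A * d g₁ g₂ ≤ d (f g₁) (f g₂) := by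
  have hp0 : 0 < p := one_pos.trans_le hp
  have hmean := rpow_le_add_div_two_of_pConvex hA.le hτ.le (zero_le_one.trans hC) hp0
    (by simpa [h02] using hstretch) (by rwa [hd]) (hconv (f 1) (f g₁) (f g₂))
  have hk : (1 + 2 ^ (p - 1) * C * p⁻¹ * τ ^ p) * A * (1 / 2)
      ≤ A / 2 * (1 + 2 ^ p * C * τ ^ p) ^ p⁻¹ := by
    nlinarith
  rw [h01, h12]
  exact (le_or_le_of_rpow_le_add_div_two (hdnn _ _) (hdnn _ _) hp0 hmean).imp hk.trans hk.trans

/-- the non-horizontal endpoint case.  With the `p`-convex homogeneous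
semi-metric `d(g,h) = Nm(g⁻¹h)` on a Carnot group, if the endpoints `1, g₂` of a
horizontal segment with midpoint `g₁` are `A`-stretched by `f` and the image
increment `f(1)⁻¹ f(g₂)` is `τ`-non-horizontal, then one of the half pairs
`(1, g₁)`, `(g₁, g₂)` is `(1+k)A`-stretched, `k = 2^{p−1} C p⁻¹ τ^p`. -/
theorem stmt17 {G : Type*} [Group G]
    (Nm NH : G → ℝ) (d : G → G → ℝ)
    (hd : ∀ g h, d g h = Nm (g⁻¹ * h))
    (hdnn : ∀ g h, 0 ≤ d g h) (hNHnn : ∀ g, 0 ≤ NH g)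
    (p C : ℝ) (hp : 1 ≤ p) (hC : 1 ≤ C)
    (hconv : ∀ u v w : G,
      (d u w / 2) ^ p + C * NH (u⁻¹ * w) ^ p ≤ (d u v ^ p + d v w ^ p) / 2)
    (g₁ g₂ : G) (h01 : d 1 g₁ = 1 / 2) (h02 : d 1 g₂ = 1) (h12 : d g₁ g₂ = 1 / 2)
    (f : G → G) (A : ℝ) (hA : 0 < A)
    (hstretch : A * d 1 g₂ ≤ d (f 1) (f g₂))
    (τ : ℝ) (hτ : 0 < τ) (hτ1 : τ < 1)
    (hNH : τ * Nm ((f 1)⁻¹ * f g₂) ≤ NH ((f 1)⁻¹ * f g₂))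
    (htaylor : 1 + 2 ^ (p - 1) * C * p⁻¹ * τ ^ p ≤ (1 + 2 ^ p * C * τ ^ p) ^ p⁻¹) :
    (1 + 2 ^ (p - 1) * C * p⁻¹ * τ ^ p) * A * d 1 g₁ ≤ d (f 1) (f g₁) ∨
    (1 + 2 ^ (p - 1) * C * p⁻¹ * τ ^ p) * A * d g₁ g₂ ≤ d (f g₁) (f g₂) :=
  stmt17_general Nm NH d hd hdnn p C hp hC hconv g₁ g₂ h01 h02 h12 f A hA hstretch τ hτ hNH htaylor
end

section
/- Let Y₁, Y₂ be separated nets in a rational nilpotent Lie group G of topological dimension n with nilpotent dyadic tiles, and suppose the dyadic tile efficient-counting theorem holds: there is C₀ > 0 such that every finite union A of unit tiles is describable by a collection 𝒟 of dyadic tiles (via disjoint unions and proper differences, each tile used once) with #{D ∈ 𝒟 : level(D) = k} ≤ C₀·p(A)/2^{k(n−1)}. If there exist ε > 0 and C > 0 such that for every dyadic tile T of level k, |#(T ∩ Y₁) − #(T ∩ Y₂)| ≤ C·2^{k(n−1−ε)}, then there exists C' > 0 such that for every finite union A of unit tiles, |#(A ∩ Y₁) − #(A ∩ Y₂)| ≤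 C'·p(A); hence the total discrepancy on unions of tiles is linearly bounded by coarse perimeter. -/
open MeasureTheory Metric Set Classical

/-!
Split the efficient description `𝒟` of `A` by level. At level `k` there are at most
`C₀ p(A) 2^{-k(n-1)}` tiles, each of discrepancy at most `C 2^{k(n-1-ε)}`, so level `k`
contributes at most `C₀ C p(A) (2^{-ε})^k`; summing the geometric series over `k` gives
`C₀ C p(A) / (1 - 2^{-ε})`.
-/

theorem Finset.sum_le_div_one_sub_of_sum_level_le {ι : Type*} (s : Finset ι) (lvl : ι → ℕ)
    (f : ι → ℝ) {a r : ℝ} (ha : 0 ≤ a) (hr₀ : 0 ≤ r) (hr₁ : r < 1)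
    (h : ∀ k, ∑ i ∈ s with lvl i = k, f i ≤ a * r ^ k) :
    ∑ i ∈ s, f i ≤ a / (1 - r) :=
  calc ∑ i ∈ s, f i = ∑ k ∈ s.image lvl, ∑ i ∈ s with lvl i = k, f i :=
        (Finset.sum_fiberwise_of_maps_to (fun i hi => Finset.mem_image_of_mem lvl hi) f).symm
    _ ≤ ∑ k ∈ s.image lvl, a * r ^ k := Finset.sum_le_sum fun k _ => h k
    _ ≤ ∑' k : ℕ, a * r ^ k :=
        ((summable_geometric_of_lt_one hr₀ hr₁).mul_left a).sum_le_tsum _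
          fun k _ => by positivity
    _ = a / (1 - r) := by rw [tsum_mul_left, tsum_geometric_of_lt_one hr₀ hr₁, div_eq_mul_inv]

-- An inequality, not an equality: `n - 1` truncates at `n = 0`.
theorem two_rpow_mul_sub_le (k n : ℕ) (ε : ℝ) :
    (2 : ℝ) ^ ((k : ℝ) * ((n : ℝ) - 1 - ε)) ≤ 2 ^ (k * (n - 1)) * ((2 : ℝ) ^ (-ε)) ^ k := by
  have hn : (n : ℝ) - 1 ≤ ((n - 1 : ℕ) : ℝ) := by rcases n with _ | n <;> simp
  rw [← Real.rpow_natCast, ← Real.rpow_natCast, ← Real.rpow_mul zero_le_two,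
    ← Real.rpow_add two_pos]
  gcongr
  · norm_num
  · push_cast
    nlinarith [k.cast_nonneg (α := ℝ)]

theorem stmt19_general {X : Type*} [MetricSpace X] [MeasurableSpace X]
    (μ : Measure X) (n : ℕ)
    (Y₁ Y₂ : Set X)
    (Units Tiles : Set (Set X)) (lvl : Set X → ℕ)
    (C₀ : ℝ) (hC₀ : 0 < C₀)
    (hdesc : ∀ A : Set X, (∃ F : Finset (Set X), ↑F ⊆ Units ∧ A = ⋃₀ (F : Set (Set X))) →
      ∃ 𝒟 : Finset (Set X), ↑𝒟 ⊆ Tiles ∧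
        |((Y₁ ∩ A).ncard : ℝ) - ((Y₂ ∩ A).ncard : ℝ)|
          ≤ ∑ T ∈ 𝒟, |((Y₁ ∩ T).ncard : ℝ) - ((Y₂ ∩ T).ncard : ℝ)| ∧
        ∀ k : ℕ, ((𝒟.filter fun T => lvl T = k).card : ℝ)
          ≤ C₀ * (μ (thickening 1 (frontier A))).toReal / 2 ^ (k * (n - 1)))
    (ε C : ℝ) (hε : 0 < ε) (hC : 0 < C)
    (htile : ∀ T ∈ Tiles,
      |((Y₁ ∩ T).ncard : ℝ) - ((Y₂ ∩ T).ncard : ℝ)|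
        ≤ C * (2 : ℝ) ^ ((lvl T : ℝ) * ((n : ℝ) - 1 - ε))) :
    ∃ C' > 0, ∀ A : Set X, (∃ F : Finset (Set X), ↑F ⊆ Units ∧ A = ⋃₀ (F : Set (Set X))) →
      |((Y₁ ∩ A).ncard : ℝ) - ((Y₂ ∩ A).ncard : ℝ)|
        ≤ C' * (μ (thickening 1 (frontier A))).toReal := by
  set r : ℝ := (2 : ℝ) ^ (-ε)
  have hr₀ : 0 < r := Real.rpow_pos_of_pos two_pos _
  have hr₁ : r < 1 := Real.rpow_lt_one_of_one_lt_of_neg one_lt_two (neg_neg_of_pos hε)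
  refine ⟨C₀ * C / (1 - r), div_pos (by positivity) (sub_pos.2 hr₁), fun A hA => ?_⟩
  obtain ⟨𝒟, h𝒟, hsum, hcard⟩ := hdesc A hA
  set p := (μ (thickening 1 (frontier A))).toReal
  have hlevel : ∀ k, ∑ T ∈ 𝒟 with lvl T = k, |((Y₁ ∩ T).ncard : ℝ) - ((Y₂ ∩ T).ncard : ℝ)|
      ≤ C₀ * C * p * r ^ k := fun k =>
    calc _ ≤ ((𝒟.filter fun T => lvl T = k).card : ℝ)
            * (C * 2 ^ ((k : ℝ) * ((n : ℝ) - 1 - ε))) := by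
          rw [← nsmul_eq_mul]
          refine Finset.sum_le_card_nsmul _ _ _ fun T hT => ?_
          rw [Finset.mem_filter] at hT
          exact hT.2 ▸ htile T (h𝒟 hT.1)
      _ ≤ C₀ * p / 2 ^ (k * (n - 1)) * (C * (2 ^ (k * (n - 1)) * r ^ k)) := by
          gcongr
          · exact hcard k
          · exact two_rpow_mul_sub_le k n ε
      _ = C₀ * C * p * r ^ k := by field_simp
  calc _ ≤ _ := hsum
    _ ≤ C₀ * C * p / (1 - r) :=
        Finset.sum_le_div_one_sub_of_sum_level_le _ _ _ (by positivity) hr₀.le hr₁ hlevel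
    _ = C₀ * C / (1 - r) * p := by ring

/-- summing per-tile discrepancy bounds over an efficient dyadic
description.  If every finite union `A` of unit tiles is describable by a
collection `𝒟` of dyadic tiles with at most `C₀ p(A)/2^{k(n−1)}` tiles of level
`k` (so that the discrepancy on `A` is bounded by the sum of the discrepancies
on the tiles of `𝒟`), and each dyadic tile of level `k` has discrepancy at most
`C·2^{k(n−1−ε)}`, then the discrepancy on every finite union of unit tiles is
linearly bounded by its coarse perimeter. -/
theorem stmt19 {X : Type*} [MetricSpace X] [MeasurableSpace X]
    (μ : Measure X) (n : ℕ) (hn : 2 ≤ n)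
    (Y₁ Y₂ : Set X)
    (Units Tiles : Set (Set X)) (lvl : Set X → ℕ)
    (c : ℝ) (hc : 0 < c)
    (hperim : ∀ A : Set X, (∃ F : Finset (Set X), ↑F ⊆ Units ∧ A = ⋃₀ (F : Set (Set X))) →
      A.Nonempty → c ≤ (μ (thickening 1 (frontier A))).toReal)
    (C₀ : ℝ) (hC₀ : 0 < C₀)
    (hdesc : ∀ A : Set X, (∃ F : Finset (Set X), ↑F ⊆ Units ∧ A = ⋃₀ (F : Set (Set X))) →
      ∃ 𝒟 : Finset (Set X), ↑𝒟 ⊆ Tiles ∧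
        |((Y₁ ∩ A).ncard : ℝ) - ((Y₂ ∩ A).ncard : ℝ)|
          ≤ ∑ T ∈ 𝒟, |((Y₁ ∩ T).ncard : ℝ) - ((Y₂ ∩ T).ncard : ℝ)| ∧
        ∀ k : ℕ, ((𝒟.filter fun T => lvl T = k).card : ℝ)
          ≤ C₀ * (μ (thickening 1 (frontier A))).toReal / 2 ^ (k * (n - 1)))
    (ε C : ℝ) (hε : 0 < ε) (hC : 0 < C)
    (htile : ∀ T ∈ Tiles,
      |((Y₁ ∩ T).ncard : ℝ) - ((Y₂ ∩ T).ncard : ℝ)|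
        ≤ C * (2 : ℝ) ^ ((lvl T : ℝ) * ((n : ℝ) - 1 - ε))) :
    ∃ C' > 0, ∀ A : Set X, (∃ F : Finset (Set X), ↑F ⊆ Units ∧ A = ⋃₀ (F : Set (Set X))) →
      |((Y₁ ∩ A).ncard : ℝ) - ((Y₂ ∩ A).ncard : ℝ)|
        ≤ C' * (μ (thickening 1 (frontier A))).toReal :=
  stmt19_general μ n Y₁ Y₂ Units Tiles lvl C₀ hC₀ hdesc ε C hε hC htile
end
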